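/- The nilradical N = { x ∈ A : x^n = 0 for some n > 0 } of a commutative MVW-rig A equals the intersection of all prime ideals of A. -/
import Mathlib


/-- An MV-algebra `(A, ⊕, ¬, 0)`. -/
class MValg (A : Type*) where
  add : A → A → A
  neg : A → A
  zero : A
  add_assoc : ∀ x y z : A, add x (add y z) = add (add x y) z
  add_comm : ∀ x y : A, add x y = add y x
  add_zero : ∀ x : A, add x zero = x
  add_neg_zero : ∀ x : A, add x (neg zero) = neg zero
  neg_neg : ∀ x : A, neg (neg x) = x
  mv6 : ∀ x y : A, add (neg (add (neg x) y)) y = add (neg (add (neg y) x)) x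

namespace MValg

variable {A : Type*} [MValg A]

/-- Truncated difference `x ⊖ y = ¬(¬x ⊕ y)`. -/
def sub (x y : A) : A := neg (add (neg x) y)

/-- The natural MV-order: `x ≤ y` iff `x ⊖ y = 0`. -/
def le (x y : A) : Prop := sub x y = zero

/-- Join: `x ∨ y = (x ⊖ y) ⊕ y`. -/
def sup (x y : A) : A := add (sub x y) y

/-- Meet: `x ∧ y = ¬(¬x ∨ ¬y)`. -/
def inf (x y : A) : A := neg (sup (neg x) (neg y))

end MValg

/-- An MVW-rig: an MV-algebra with an associative product interacting with ⊕ and ⊖. -/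
class MVWrig (A : Type*) extends MValg A where
  mul : A → A → A
  mul_assoc : ∀ a b c : A, mul (mul a b) c = mul a (mul b c)
  mul_zero : ∀ a : A, mul a zero = zero
  zero_mul : ∀ a : A, mul zero a = zero
  mul_add_le : ∀ a b c : A, MValg.le (mul a (MValg.add b c)) (MValg.add (mul a b) (mul a c))
  add_mul_le : ∀ a b c : A, MValg.le (mul (MValg.add b c) a) (MValg.add (mul b a) (mul c a))
  mul_sub_ge : ∀ a b c : A, MValg.le (MValg.sub (mul a b) (mul a c)) (mul a (MValg.sub b c))
  sub_mul_ge : ∀ a b c : A, MValg.le (MValg.sub (mul b a) (mul c a)) (mul (MValg.sub b c) a)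

namespace MVWrig

variable {A : Type*} [MVWrig A]

/-- `pow a n` is the `(n+1)`-fold product `a^(n+1) = a·a⋯a`; exponents `n : ℕ` here
correspond exactly to the exponents `n + 1 ≥ 1` ("n-fold products") of the paper. -/
def pow (a : A) : ℕ → A
  | 0 => a
  | n + 1 => mul (pow a n) a

/-- Ideals of an MVW-rig: contain 0, downward closed, closed under ⊕,
and absorbing for the product on both sides. -/
def IsIdeal (I : Set A) : Prop :=
  MValg.zero ∈ I ∧
  (∀ a b : A, MValg.le a b → b ∈ I → a ∈ I) ∧
  (∀ a b : A, a ∈ I → b ∈ I → MValg.add a b ∈ I) ∧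
  (∀ a b : A, a ∈ I → mul a b ∈ I ∧ mul b a ∈ I)

/-- Prime ideals: `ab ∈ P` implies `a ∈ P` or `b ∈ P`. -/
def IsPrimeIdeal (P : Set A) : Prop :=
  IsIdeal P ∧ ∀ a b : A, mul a b ∈ P → a ∈ P ∨ b ∈ P

/-- The ideal generated by a set: the smallest ideal containing it
(the intersection of all ideals containing it). -/
def genIdeal (S : Set A) : Set A := ⋂₀ {I : Set A | IsIdeal I ∧ S ⊆ I}

/-- The congruence relation associated to an ideal `I`:
`x ≡_I y` iff `(x ⊖ y) ⊕ (y ⊖ x) ∈ I`. -/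
def relI (I : Set A) (x y : A) : Prop :=
  MValg.add (MValg.sub x y) (MValg.sub y x) ∈ I

/-- A congruence on an MVW-rig: an equivalence relation compatible with ⊕, ¬ and ·. -/
def IsCongruence (r : A → A → Prop) : Prop :=
  Equivalence r ∧
  (∀ a b c d : A, r a b → r c d → r (MValg.add a c) (MValg.add b d)) ∧
  (∀ a b : A, r a b → r (MValg.neg a) (MValg.neg b)) ∧
  (∀ a b c d : A, r a b → r c d → r (mul a c) (mul b d))

/-- Homomorphisms of MVW-rigs. -/
def IsHom {A B : Type*} [MVWrig A] [MVWrig B] (f : A → B) : Prop :=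
  f MValg.zero = MValg.zero ∧
  (∀ x y : A, f (MValg.add x y) = MValg.add (f x) (f y)) ∧
  (∀ x : A, f (MValg.neg x) = MValg.neg (f x)) ∧
  (∀ x y : A, f (mul x y) = mul (f x) (f y))

end MVWrig

section Aux

namespace MValg
variable {A : Type*} [MValg A]

lemma zero_add' (x : A) : add zero x = x := by rw [add_comm]; exact add_zero x

lemma top_add' (x : A) : add (neg zero) x = neg zero := by
  rw [add_comm]; exact add_neg_zero x

lemma neg_add_self' (x : A) : add (neg x) x = neg zero := by
  have h := mv6 x (neg zero)
  simp only [add_neg_zero, neg_neg, zero_add'] at h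
  exact h.symm

lemma le_add_right (x z : A) : le x (add x z) := by
  show sub x (add x z) = zero
  unfold sub
  rw [add_assoc, neg_add_self', top_add', neg_neg]

lemma le_iff_exists {x y : A} : le x y ↔ ∃ z, y = add x z := by
  constructor
  · intro h
    have h6 := mv6 x y
    change add (sub x y) y = add (sub y x) x at h6
    rw [h, zero_add'] at h6
    exact ⟨sub y x, h6.trans (add_comm _ _)⟩
  · rintro ⟨z, rfl⟩; exact le_add_right x z

lemma le_refl' (x : A) : le x x := by
  rw [le_iff_exists]; exact ⟨zero, (add_zero x).symm⟩

lemma le_trans' {x y z : A} (h1 : le x y) (h2 : le y z) : le x z := by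
  rw [le_iff_exists] at *
  obtain ⟨a, rfl⟩ := h1; obtain ⟨b, rfl⟩ := h2
  exact ⟨add a b, (MValg.add_assoc x a b).symm⟩

lemma zero_le' (x : A) : le zero x := by
  rw [le_iff_exists]; exact ⟨x, (zero_add' x).symm⟩

lemma le_antisymm' {x y : A} (h1 : le x y) (h2 : le y x) : x = y := by
  have h6 := mv6 x y
  change add (sub x y) y = add (sub y x) x at h6
  rw [h1, h2, zero_add', zero_add'] at h6
  exact h6.symm

lemma le_zero_eq {x : A} (h : le x zero) : x = zero := le_antisymm' h (zero_le' x)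

lemma add_le_add' {a b c d : A} (h1 : le a b) (h2 : le c d) :
    le (add a c) (add b d) := by
  rw [le_iff_exists] at *
  obtain ⟨z, rfl⟩ := h1; obtain ⟨w, rfl⟩ := h2
  refine ⟨add z w, ?_⟩
  rw [← add_assoc, ← add_assoc]
  congr 1
  rw [add_assoc, add_assoc, add_comm c z]

end MValg

namespace MVWrig
variable {A : Type*} [MVWrig A]
open MValg

lemma mul_le_mul_right' {a b : A} (c : A) (h : le a b) : le (mul a c) (mul b c) := by
  have hk := sub_mul_ge c a b
  rw [show sub a b = zero from h, zero_mul] at hk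
  exact le_zero_eq hk

lemma mul_le_mul_left' {a b : A} (c : A) (h : le a b) : le (mul c a) (mul c b) := by
  have hk := mul_sub_ge c a b
  rw [show sub a b = zero from h, mul_zero] at hk
  exact le_zero_eq hk

lemma pow_mul_pow (x : A) (n m : ℕ) :
    mul (pow x n) (pow x m) = pow x (n + m + 1) := by
  induction m with
  | zero => rfl
  | succ m ih =>
    show mul (pow x n) (mul (pow x m) x) = _
    rw [← mul_assoc, ih]
    rfl

/-- Generators of the multiplicative part of the ideal generated by `a`. -/
inductive Gen (a : A) : A → Prop
  | base : Gen a a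
  | mul (c : A) : Gen a (mul c a)

/-- Finite sums of generators. -/
inductive TSum (a : A) : A → Prop
  | zero : TSum a MValg.zero
  | add {t g : A} : TSum a t → Gen a g → TSum a (MValg.add t g)

lemma gen_mul_right (hcomm : ∀ x y : A, mul x y = mul y x)
    {a g : A} (hg : Gen a g) (b : A) : Gen a (mul g b) := by
  cases hg with
  | base => rw [hcomm]; exact Gen.mul b
  | mul c =>
    rw [mul_assoc, hcomm a b, ← mul_assoc]
    exact Gen.mul (mul c b)

lemma tsum_add {a t s : A} (ht : TSum a t) (hs : TSum a s) : TSum a (add t s) := by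
  induction hs with
  | zero => rw [MValg.add_zero]; exact ht
  | add hs' hg ih => rw [MValg.add_assoc]; exact TSum.add ih hg

lemma tsum_mul_right (hcomm : ∀ x y : A, mul x y = mul y x)
    {a t : A} (ht : TSum a t) (b : A) :
    ∃ t', TSum a t' ∧ le (mul t b) t' := by
  induction ht with
  | zero => exact ⟨MValg.zero, TSum.zero, by rw [zero_mul]; exact le_refl' _⟩
  | @add t g ht hg ih =>
    obtain ⟨t', ht', hle⟩ := ih
    refine ⟨add t' (mul g b), TSum.add ht' (gen_mul_right hcomm hg b), ?_⟩
    exact le_trans' (add_mul_le b t g) (add_le_add' hle (le_refl' _))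

lemma gen_gen_mem {I : Set A} (hI : IsIdeal I)
    (hcomm : ∀ x y : A, mul x y = mul y x)
    {a b g h : A} (hab : mul a b ∈ I) (hg : Gen a g) (hh : Gen b h) :
    mul g h ∈ I := by
  cases hg with
  | base =>
    cases hh with
    | base => exact hab
    | mul d =>
      have : mul a (mul d b) = mul d (mul a b) := by
        rw [← mul_assoc, hcomm a d, mul_assoc]
      rw [this]
      exact ((hI.2.2.2 (mul a b) d hab).2)
  | mul c =>
    cases hh with
    | base =>
      rw [mul_assoc]
      exact (hI.2.2.2 (mul a b) c hab).2
    | mul d =>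
      have : mul (mul c a) (mul d b) = mul c (mul d (mul a b)) := by
        rw [mul_assoc]
        congr 1
        rw [← mul_assoc, hcomm a d, mul_assoc]
      rw [this]
      exact (hI.2.2.2 _ c ((hI.2.2.2 (mul a b) d hab).2)).2

lemma gen_tsum_mem {I : Set A} (hI : IsIdeal I)
    (hcomm : ∀ x y : A, mul x y = mul y x)
    {a b g s : A} (hab : mul a b ∈ I) (hg : Gen a g) (hs : TSum b s) :
    mul g s ∈ I := by
  induction hs with
  | zero => rw [mul_zero]; exact hI.1
  | @add s h hs hh ih =>
    have h1 : mul g h ∈ I := gen_gen_mem hI hcomm hab hg hh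
    exact hI.2.1 _ _ (mul_add_le g s h) (hI.2.2.1 _ _ ih h1)

lemma tsum_tsum_mem {I : Set A} (hI : IsIdeal I)
    (hcomm : ∀ x y : A, mul x y = mul y x)
    {a b t s : A} (hab : mul a b ∈ I) (ht : TSum a t) (hs : TSum b s) :
    mul t s ∈ I := by
  induction ht with
  | zero => rw [zero_mul]; exact hI.1
  | @add t g ht hg ih =>
    have h1 : mul g s ∈ I := gen_tsum_mem hI hcomm hab hg hs
    exact hI.2.1 _ _ (add_mul_le s t g) (hI.2.2.1 _ _ ih h1)

/-- The ideal generated by an ideal `M` together with an element `a`. -/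
def ext1 (a : A) (M : Set A) : Set A :=
  {z | ∃ m t, m ∈ M ∧ TSum a t ∧ le z (add m t)}

lemma mem_ext1_self₁ {a : A} {M : Set A} {m : A} (hm : m ∈ M) : m ∈ ext1 a M :=
  ⟨m, MValg.zero, hm, TSum.zero, by rw [MValg.add_zero]; exact le_refl' _⟩

lemma mem_ext1_self₂ {a : A} {M : Set A} (h0 : MValg.zero ∈ M) : a ∈ ext1 a M := by
  refine ⟨MValg.zero, add MValg.zero a, h0, TSum.add TSum.zero Gen.base, ?_⟩
  rw [zero_add', zero_add']
  exact le_refl' _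

lemma ext1_ideal (hcomm : ∀ x y : A, mul x y = mul y x)
    {a : A} {M : Set A} (hM : IsIdeal M) : IsIdeal (ext1 a M) := by
  refine ⟨mem_ext1_self₁ hM.1, ?_, ?_, ?_⟩
  · rintro z w hzw ⟨m, t, hm, ht, hle⟩
    exact ⟨m, t, hm, ht, le_trans' hzw hle⟩
  · rintro z w ⟨m, t, hm, ht, hle⟩ ⟨m', t', hm', ht', hle'⟩
    refine ⟨add m m', add t t', hM.2.2.1 _ _ hm hm', tsum_add ht ht', ?_⟩
    refine le_trans' (add_le_add' hle hle') ?_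
    have : add (add m t) (add m' t') = add (add m m') (add t t') := by
      rw [← MValg.add_assoc, ← MValg.add_assoc]
      congr 1
      rw [MValg.add_assoc, MValg.add_assoc, MValg.add_comm t m']
    rw [this]; exact le_refl' _
  · rintro z b ⟨m, t, hm, ht, hle⟩
    obtain ⟨t', ht', hle'⟩ := tsum_mul_right hcomm ht b
    have key : mul z b ∈ ext1 a M := by
      refine ⟨mul m b, t', (hM.2.2.2 m b hm).1, ht', ?_⟩
      refine le_trans' (mul_le_mul_right' b hle) ?_
      exact le_trans' (add_mul_le b m t) (add_le_add' (le_refl' _) hle')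
    exact ⟨key, by rw [hcomm]; exact key⟩

lemma prime_of_pow_mem {P : Set A} (hP : IsPrimeIdeal P) {x : A} {n : ℕ}
    (h : pow x n ∈ P) : x ∈ P := by
  induction n with
  | zero => exact h
  | succ n ih =>
    rcases hP.2 _ _ h with h' | h'
    · exact ih h'
    · exact h'

end MVWrig

end Aux

open MVWrig in
/-- The nilradical `N = {x | xⁿ = 0 for some n > 0}` of a commutative MVW-rig is the
intersection of all its prime ideals. Here `pow x n = x^(n+1)` ranges over all
exponents `≥ 1`. -/
theorem stmt_14 {A : Type*} [MVWrig A]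
    (hcomm : ∀ x y : A, MVWrig.mul x y = MVWrig.mul y x) :
    {x : A | ∃ n : ℕ, pow x n = MValg.zero} = ⋂₀ {P : Set A | IsPrimeIdeal P} := by
  ext x
  simp only [Set.mem_setOf_eq, Set.mem_sInter]
  constructor
  · rintro ⟨n, hn⟩ P hP
    exact MVWrig.prime_of_pow_mem hP (hn ▸ hP.1.1)
  · intro h
    by_contra hx
    push_neg at hx
    set 𝒮 : Set (Set A) := {I : Set A | MVWrig.IsIdeal I ∧ ∀ n, MVWrig.pow x n ∉ I} with h𝒮
    have h0 : ({MValg.zero} : Set A) ∈ 𝒮 := by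
      refine ⟨⟨rfl, ?_, ?_, ?_⟩, ?_⟩
      · rintro a b hab hb
        rw [Set.mem_singleton_iff] at hb ⊢
        subst hb
        exact MValg.le_zero_eq hab
      · rintro a b ha hb
        rw [Set.mem_singleton_iff] at ha hb ⊢
        subst ha; subst hb
        exact MValg.add_zero _
      · rintro a b ha
        rw [Set.mem_singleton_iff] at ha
        subst ha
        exact ⟨MVWrig.zero_mul b, MVWrig.mul_zero b⟩
      · intro n hn
        exact hx n hn
    have hchain : ∀ c ⊆ 𝒮, IsChain (· ⊆ ·) c → c.Nonempty →
        ∃ ub ∈ 𝒮, ∀ s ∈ c, s ⊆ ub := by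
      rintro c hc hch ⟨I0, hI0⟩
      refine ⟨⋃₀ c, ⟨⟨?_, ?_, ?_, ?_⟩, ?_⟩, fun s hs => Set.subset_sUnion_of_mem hs⟩
      · exact ⟨I0, hI0, (hc hI0).1.1⟩
      · rintro a b hab ⟨I, hI, hbI⟩
        exact ⟨I, hI, (hc hI).1.2.1 a b hab hbI⟩
      · rintro a b ⟨I, hI, haI⟩ ⟨J, hJ, hbJ⟩
        rcases hch.total hI hJ with hIJ | hJI
        · exact ⟨J, hJ, (hc hJ).1.2.2.1 a b (hIJ haI) hbJ⟩
        · exact ⟨I, hI, (hc hI).1.2.2.1 a b haI (hJI hbJ)⟩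
      · rintro a b ⟨I, hI, haI⟩
        obtain ⟨h1, h2⟩ := (hc hI).1.2.2.2 a b haI
        exact ⟨⟨I, hI, h1⟩, ⟨I, hI, h2⟩⟩
      · rintro n ⟨I, hI, hnI⟩
        exact (hc hI).2 n hnI
    obtain ⟨M, -, hMmax⟩ := zorn_subset_nonempty 𝒮 hchain {MValg.zero} h0
    have hM : MVWrig.IsIdeal M := hMmax.1.1
    have hprime : MVWrig.IsPrimeIdeal M := by
      refine ⟨hM, ?_⟩
      intro a b hab
      by_contra hcon
      push_neg at hcon
      obtain ⟨ha, hb⟩ := hcon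
      have key : ∀ y : A, y ∉ M → ∃ n p t, p ∈ M ∧ MVWrig.TSum y t ∧
          MValg.le (MVWrig.pow x n) (MValg.add p t) := by
        intro y hy
        have hE : MVWrig.IsIdeal (MVWrig.ext1 y M) := MVWrig.ext1_ideal hcomm hM
        have hME : M ⊆ MVWrig.ext1 y M := fun m hm => MVWrig.mem_ext1_self₁ hm
        have hnotS : MVWrig.ext1 y M ∉ 𝒮 := by
          intro hmem
          exact hy (hMmax.2 hmem hME (MVWrig.mem_ext1_self₂ hM.1))
        have hnot : ¬ (∀ n, MVWrig.pow x n ∉ MVWrig.ext1 y M) :=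
          fun hforall => hnotS ⟨hE, hforall⟩
        push_neg at hnot
        obtain ⟨n, hn⟩ := hnot
        obtain ⟨p, t, hp, ht, hle⟩ := hn
        exact ⟨n, p, t, hp, ht, hle⟩
      obtain ⟨n, p, t, hp, ht, hlt⟩ := key a ha
      obtain ⟨m, q, s, hq, hs, hls⟩ := key b hb
      have h1 : MValg.le (MVWrig.pow x (n + m + 1))
          (MValg.add (MVWrig.mul (MValg.add p t) q) (MVWrig.mul (MValg.add p t) s)) := by
        rw [← MVWrig.pow_mul_pow]
        refine MValg.le_trans' (MVWrig.mul_le_mul_right' _ hlt) ?_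
        refine MValg.le_trans' (MVWrig.mul_le_mul_left' _ hls) ?_
        exact MVWrig.mul_add_le _ _ _
      have h2a : MVWrig.mul (MValg.add p t) q ∈ M := (hM.2.2.2 q _ hq).2
      have h2b : MVWrig.mul (MValg.add p t) s ∈ M := by
        apply hM.2.1 _ _ (MVWrig.add_mul_le s p t)
        exact hM.2.2.1 _ _ ((hM.2.2.2 p s hp).1)
          (MVWrig.tsum_tsum_mem hM hcomm hab ht hs)
      exact hMmax.1.2 (n + m + 1)
        (hM.2.1 _ _ h1 (hM.2.2.1 _ _ h2a h2b))
    exact hMmax.1.2 0 (h M hprime)
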